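/- arXiv:2106.06348 — 6 statements merged into one kernel-verified Lean document; each statement's English description precedes it below -/
import Mathlib

section
/- Under the bipartite stochastic block model with parameters (π, ρ, δ) and sizes (n_r, n_c), and with S a uniformly random permutation of the rows independent of A, the expected robustness function satisfies E[R(A,S,m)] = 1 - Σ_{q=1}^{Q_c} ρ_q (1 - δ_{+q})^{n_r - m} for every m ∈ {0,...,n_r}, where δ_{+q} = Σ_{k=1}^{Q_r} π_k δ_{kq} and R(A,s,m) = 1 - (1/n_c) Σ_{j=1}^{n_c} 1{Σ_{i=m+1}^{n_r} A_{s(i),j} = 0}. -/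
open Finset

/-- Robustness of a bipartite network after `m` primary (row) extinctions
along the extinction sequence `s`. -/
noncomputable def rob {nr nc : ℕ} (A : Fin nr → Fin nc → Bool)
    (s : Equiv.Perm (Fin nr)) (m : ℕ) : ℝ :=
  1 - (nc : ℝ)⁻¹ *
    ∑ j : Fin nc,
      (if ∀ i : Fin nr, m ≤ (i : ℕ) → A (s i) j = false then (1 : ℝ) else 0)

/-- biSBM probability of the incidence matrix `A`. -/
def biSBMprob {nr nc Qr Qc : ℕ} (p : Fin Qr → ℝ) (r : Fin Qc → ℝ)
    (δ : Fin Qr → Fin Qc → ℝ) (A : Fin nr → Fin nc → Bool) : ℝ :=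
  ∑ Z : Fin nr → Fin Qr, ∑ W : Fin nc → Fin Qc,
    (∏ i, p (Z i)) * (∏ j, r (W j)) *
      ∏ i, ∏ j, (if A i j then δ (Z i) (W j) else 1 - δ (Z i) (W j))


private lemma sum_funs {n : ℕ} {κ : Type*} [Fintype κ] (g : Fin n → κ → ℝ) :
    ∑ f : Fin n → κ, ∏ i, g i (f i) = ∏ i, ∑ b, g i b := by
  classical
  rw [Finset.prod_univ_sum, Fintype.piFinset_univ]

private lemma sum_funs2 {nr nc : ℕ} (g : Fin nr → Fin nc → Bool → ℝ) :
    ∑ A : Fin nr → Fin nc → Bool, ∏ i, ∏ j, g i j (A i j)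
      = ∏ i, ∏ j, ∑ b, g i j b := by
  rw [sum_funs (g := fun i (f : Fin nc → Bool) => ∏ j, g i j (f j))]
  exact Finset.prod_congr rfl fun i _ => sum_funs _

private lemma colsum {nr nc Qr Qc : ℕ} (p : Fin Qr → ℝ) (r : Fin Qc → ℝ)
    (δ : Fin Qr → Fin Qc → ℝ) (hp1 : ∑ k, p k = 1) (hr1 : ∑ q, r q = 1)
    (P : Fin nr → Prop) [DecidablePred P] (j0 : Fin nc) :
    ∑ A : Fin nr → Fin nc → Bool, biSBMprob p r δ A *
        (if ∀ i : Fin nr, P i → A i j0 = false then (1:ℝ) else 0)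
      = ∑ q, r q * (1 - ∑ k, p k * δ k q) ^ (univ.filter P).card := by
  classical
  have hind : ∀ A : Fin nr → Fin nc → Bool,
      (if ∀ i : Fin nr, P i → A i j0 = false then (1:ℝ) else 0)
      = ∏ i : Fin nr, ∏ j : Fin nc,
          (if P i ∧ j = j0 then (if A i j then (0:ℝ) else 1) else 1) := by
    intro A
    by_cases h : ∀ i : Fin nr, P i → A i j0 = false
    · rw [if_pos h]
      symm
      apply Finset.prod_eq_one
      intro i _
      apply Finset.prod_eq_one
      intro j _
      split_ifs with hc hA
      · rw [hc.2] at hA; rw [h i hc.1] at hA; exact absurd hA (by simp)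
      · rfl
      · rfl
    · rw [if_neg h]
      push_neg at h
      obtain ⟨i, hi, hAi⟩ := h
      symm
      apply Finset.prod_eq_zero (Finset.mem_univ i)
      apply Finset.prod_eq_zero (Finset.mem_univ j0)
      simp only [ne_eq, Bool.not_eq_false] at hAi
      rw [if_pos ⟨hi, rfl⟩, if_pos hAi]
  simp_rw [hind, biSBMprob, Finset.sum_mul]
  rw [Finset.sum_comm]
  have step1 : ∀ Z : Fin nr → Fin Qr,
      (∑ A : Fin nr → Fin nc → Bool, ∑ W : Fin nc → Fin Qc,
        (∏ i, p (Z i)) * (∏ j, r (W j)) *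
          (∏ i, ∏ j, (if A i j then δ (Z i) (W j) else 1 - δ (Z i) (W j))) *
          ∏ i, ∏ j, (if P i ∧ j = j0 then (if A i j then (0:ℝ) else 1) else 1))
      = ∑ W : Fin nc → Fin Qc, (∏ i, p (Z i)) * (∏ j, r (W j)) *
          ∏ i : Fin nr, (if P i then 1 - δ (Z i) (W j0) else 1) := by
    intro Z
    rw [Finset.sum_comm]
    refine Finset.sum_congr rfl fun W _ => ?_
    have : ∀ A : Fin nr → Fin nc → Bool,
        (∏ i, p (Z i)) * (∏ j, r (W j)) *
          (∏ i, ∏ j, (if A i j then δ (Z i) (W j) else 1 - δ (Z i) (W j))) *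
          (∏ i, ∏ j, (if P i ∧ j = j0 then (if A i j then (0:ℝ) else 1) else 1))
        = (∏ i, p (Z i)) * (∏ j, r (W j)) *
          ∏ i, ∏ j, ((if A i j then δ (Z i) (W j) else 1 - δ (Z i) (W j)) *
            (if P i ∧ j = j0 then (if A i j then (0:ℝ) else 1) else 1)) := by
      intro A
      rw [mul_assoc, ← Finset.prod_mul_distrib]
      congr 1
      exact Finset.prod_congr rfl fun i _ => (Finset.prod_mul_distrib).symm
    simp_rw [this]
    rw [← Finset.mul_sum,
      sum_funs2 (g := fun i j b => (if b then δ (Z i) (W j) else 1 - δ (Z i) (W j)) *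
        (if P i ∧ j = j0 then (if b then (0:ℝ) else 1) else 1))]
    congr 1
    have hb : ∀ (i : Fin nr) (j : Fin nc),
        (∑ b : Bool, (if b then δ (Z i) (W j) else 1 - δ (Z i) (W j)) *
          (if P i ∧ j = j0 then (if b then (0:ℝ) else 1) else 1))
        = if P i ∧ j = j0 then 1 - δ (Z i) (W j) else 1 := by
      intro i j
      rw [Fintype.sum_bool]
      by_cases h : P i ∧ j = j0 <;> simp [h] <;> ring
    refine Finset.prod_congr rfl fun i _ => ?_
    rw [Finset.prod_congr rfl fun j _ => hb i j]
    by_cases h : P i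
    · simp only [h, true_and]
      simp [Finset.prod_ite_eq' univ j0 (fun j => 1 - δ (Z i) (W j))]
    · simp [h]
  rw [Finset.sum_congr rfl fun Z _ => step1 Z]
  rw [Finset.sum_comm]
  have hβ : ∀ q, (∑ k, p k * (1 - δ k q)) = 1 - ∑ k, p k * δ k q := by
    intro q
    simp_rw [mul_sub, mul_one, Finset.sum_sub_distrib, hp1]
  have step2 : ∀ W : Fin nc → Fin Qc,
      (∑ Z : Fin nr → Fin Qr, (∏ i, p (Z i)) * (∏ j, r (W j)) *
        ∏ i : Fin nr, (if P i then 1 - δ (Z i) (W j0) else 1))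
      = (∏ j, r (W j)) * (1 - ∑ k, p k * δ k (W j0)) ^ (univ.filter P).card := by
    intro W
    have : ∀ Z : Fin nr → Fin Qr,
        (∏ i, p (Z i)) * (∏ j, r (W j)) *
          ∏ i : Fin nr, (if P i then 1 - δ (Z i) (W j0) else 1)
        = (∏ j, r (W j)) *
          ∏ i : Fin nr, (p (Z i) * if P i then 1 - δ (Z i) (W j0) else 1) := by
      intro Z
      rw [Finset.prod_mul_distrib]
      ring
    simp_rw [this]
    rw [← Finset.mul_sum]
    congr 1
    rw [sum_funs (g := fun i k => p k * if P i then 1 - δ k (W j0) else 1)]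
    have : ∀ i : Fin nr, (∑ k, p k * if P i then 1 - δ k (W j0) else 1)
        = if P i then 1 - ∑ k, p k * δ k (W j0) else 1 := by
      intro i
      by_cases h : P i
      · simp only [h, if_true]; exact hβ _
      · simp [h, hp1]
    rw [Finset.prod_congr rfl fun i _ => this i]
    rw [Finset.prod_ite, Finset.prod_const, Finset.prod_const_one, mul_one]
  rw [Finset.sum_congr rfl fun W _ => step2 W]
  have hrw : ∀ W : Fin nc → Fin Qc,
      (∏ j, r (W j)) * (1 - ∑ k, p k * δ k (W j0)) ^ (univ.filter P).card
      = ∏ j : Fin nc, (r (W j) *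
          if j = j0 then (1 - ∑ k, p k * δ k (W j)) ^ (univ.filter P).card else 1) := by
    intro W
    rw [Finset.prod_mul_distrib]
    congr 1
    simp [Finset.prod_ite_eq' univ j0
      (fun j => (1 - ∑ k, p k * δ k (W j)) ^ (univ.filter P).card)]
  rw [Finset.sum_congr rfl fun W _ => hrw W]
  rw [sum_funs (g := fun j q => r q *
    if j = j0 then (1 - ∑ k, p k * δ k q) ^ (univ.filter P).card else 1)]
  have : ∀ j : Fin nc, (∑ q, r q *
      if j = j0 then (1 - ∑ k, p k * δ k q) ^ (univ.filter P).card else 1)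
      = if j = j0 then ∑ q, r q * (1 - ∑ k, p k * δ k q) ^ (univ.filter P).card else 1 := by
    intro j
    by_cases h : j = j0
    · simp [h]
    · simp [h, hr1]
  rw [Finset.prod_congr rfl fun j _ => this j]
  simp [Finset.prod_ite_eq' univ j0
    (fun _ => ∑ q, r q * (1 - ∑ k, p k * δ k q) ^ (univ.filter P).card)]

private lemma base_card (nr m : ℕ) :
    ((univ : Finset (Fin nr)).filter fun i : Fin nr => m ≤ (i:ℕ)).card = nr - m := by
  rw [← Nat.card_Ico m nr]
  apply Finset.card_bij (fun (i : Fin nr) _ => (i : ℕ))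
  · intro a ha
    simp only [mem_filter, mem_univ, true_and] at ha
    exact Finset.mem_Ico.2 ⟨ha, a.isLt⟩
  · intro a _ b _ h
    exact Fin.ext h
  · intro b hb
    rw [Finset.mem_Ico] at hb
    exact ⟨⟨b, hb.2⟩, by simp [hb.1], rfl⟩

private lemma perm_card {nr m : ℕ} (s : Equiv.Perm (Fin nr)) :
    ((univ : Finset (Fin nr)).filter fun i : Fin nr => m ≤ ((s.symm i : Fin nr):ℕ)).card = nr - m := by
  classical
  have h : ((univ : Finset (Fin nr)).filter fun i : Fin nr => m ≤ ((s.symm i : Fin nr):ℕ))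
      = ((univ : Finset (Fin nr)).filter fun i : Fin nr => m ≤ (i:ℕ)).map s.toEmbedding := by
    ext i
    simp only [mem_filter, mem_univ, true_and, Finset.mem_map, Equiv.coe_toEmbedding]
    constructor
    · intro h
      exact ⟨s.symm i, by simpa using h, Equiv.apply_symm_apply s i⟩
    · rintro ⟨a, ha, rfl⟩
      rw [Equiv.symm_apply_apply]
      simpa using ha
  rw [h, Finset.card_map, base_card]

theorem stmt_2 {nr nc Qr Qc : ℕ} (hnc : 0 < nc) (p : Fin Qr → ℝ)
    (r : Fin Qc → ℝ) (δ : Fin Qr → Fin Qc → ℝ)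
    (hp0 : ∀ k, 0 ≤ p k) (hp1 : ∑ k, p k = 1)
    (hr0 : ∀ q, 0 ≤ r q) (hr1 : ∑ q, r q = 1)
    (hδ : ∀ k q, 0 < δ k q ∧ δ k q < 1)
    (m : ℕ) (hm : m ≤ nr) :
    -- E_{A,S}[ R(A,S,m) ] with S uniform on permutations, independent of A
    ((Nat.factorial nr : ℝ))⁻¹ *
        ∑ s : Equiv.Perm (Fin nr),
          ∑ A : Fin nr → Fin nc → Bool, biSBMprob p r δ A * rob A s m
      = 1 - ∑ q, r q * (1 - ∑ k, p k * δ k q) ^ (nr - m) := by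
  classical
  set C : ℝ := ∑ q, r q * (1 - ∑ k, p k * δ k q) ^ (nr - m) with hCdef
  have htotal : ∑ A : Fin nr → Fin nc → Bool, biSBMprob p r δ A = 1 := by
    have h := colsum p r δ hp1 hr1 (fun _ : Fin nr => False) ⟨0, hnc⟩
    simpa [hr1] using h
  have hcol : ∀ (s : Equiv.Perm (Fin nr)) (j : Fin nc),
      ∑ A : Fin nr → Fin nc → Bool, biSBMprob p r δ A *
        (if ∀ i : Fin nr, m ≤ (i:ℕ) → A (s i) j = false then (1:ℝ) else 0) = C := by
    intro s j
    have heq : ∀ A : Fin nr → Fin nc → Bool,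
        (∀ i : Fin nr, m ≤ (i:ℕ) → A (s i) j = false) ↔
        (∀ i : Fin nr, m ≤ ((s.symm i : Fin nr):ℕ) → A i j = false) := by
      intro A
      constructor
      · intro h i hi
        have := h (s.symm i) hi
        rwa [Equiv.apply_symm_apply] at this
      · intro h i hi
        apply h (s i)
        rwa [Equiv.symm_apply_apply]
    simp_rw [heq]
    rw [colsum p r δ hp1 hr1 (fun i : Fin nr => m ≤ ((s.symm i : Fin nr):ℕ)) j,
      perm_card s]
  have hncne : (nc : ℝ) ≠ 0 := by exact_mod_cast hnc.ne'
  have hrob : ∀ s : Equiv.Perm (Fin nr),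
      ∑ A : Fin nr → Fin nc → Bool, biSBMprob p r δ A * rob A s m = 1 - C := by
    intro s
    have h1 : ∀ A : Fin nr → Fin nc → Bool, biSBMprob p r δ A * rob A s m
        = biSBMprob p r δ A - (nc:ℝ)⁻¹ * ∑ j : Fin nc, biSBMprob p r δ A *
            (if ∀ i : Fin nr, m ≤ (i:ℕ) → A (s i) j = false then (1:ℝ) else 0) := by
      intro A
      simp only [rob, mul_sub, mul_one]
      rw [← Finset.mul_sum]
      ring
    rw [Finset.sum_congr rfl fun A _ => h1 A, Finset.sum_sub_distrib, htotal,
      ← Finset.mul_sum, Finset.sum_comm,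
      Finset.sum_congr rfl fun j _ => hcol s j,
      Finset.sum_const, card_univ, Fintype.card_fin, nsmul_eq_mul,
      ← mul_assoc, inv_mul_cancel₀ hncne, one_mul]
  rw [Finset.sum_congr rfl fun s _ => hrob s, Finset.sum_const, card_univ,
    Fintype.card_perm, Fintype.card_fin, nsmul_eq_mul, ← mul_assoc,
    inv_mul_cancel₀ (by exact_mod_cast (Nat.factorial_pos nr).ne'), one_mul]
end

section
/- Under the bipartite stochastic block model with parameters (π, ρ, δ) and sizes (n_r, n_c), and with S uniform on permutations of rows independent of A, the expected robustness statistic satisfies (1/n_r) Σ_{m=0}^{n_r} E[R(A,S,m)] = 1 - (1/n_r) Σ_{q=1}^{Q_c} ρ_q · ((1-δ_{+q}) - (1-δ_{+q})^{n_r+1}) / δ_{+q}, where δ_{+q} = Σ_k π_k δ_{kq} > 0. -/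
open Finset

lemma sum_prod_pi {ι κ : Type*} [Fintype ι] [DecidableEq ι] [Fintype κ] (f : ι → κ → ℝ) :
    ∑ A : ι → κ, ∏ i, f i (A i) = ∏ i, ∑ b, f i b :=
  (Fintype.prod_sum (fun i b => f i b)).symm

lemma sum_prod_pi2 {nr nc : ℕ} (f : Fin nr → Fin nc → Bool → ℝ) :
    ∑ A : Fin nr → Fin nc → Bool, ∏ i, ∏ j, f i j (A i j)
      = ∏ i, ∏ j, ∑ b, f i j b :=
  calc ∑ A : Fin nr → Fin nc → Bool, ∏ i, ∏ j, f i j (A i j)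
      = ∑ A : Fin nr → Fin nc → Bool, ∏ i, (fun g => ∏ j, f i j (g j)) (A i) := rfl
    _ = ∏ i, ∑ g : Fin nc → Bool, ∏ j, f i j (g j) :=
        sum_prod_pi (κ := Fin nc → Bool) (fun i g => ∏ j, f i j (g j))
    _ = ∏ i, ∏ j, ∑ b, f i j b :=
        Finset.prod_congr rfl fun i _ => sum_prod_pi (fun j b => f i j b)

lemma card_filter_le {nr m : ℕ} (h : m ≤ nr) :
    ((univ : Finset (Fin nr)).filter (fun i => m ≤ ((i : Fin nr) : ℕ))).card = nr - m := by
  have himg : (((univ : Finset (Fin nr)).filter fun i => m ≤ ((i : Fin nr) : ℕ)).image Fin.val)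
      = Finset.Ico m nr := by
    ext a
    simp only [Finset.mem_image, Finset.mem_filter, Finset.mem_univ, true_and, Finset.mem_Ico]
    constructor
    · rintro ⟨i, hi, rfl⟩; exact ⟨hi, i.isLt⟩
    · rintro ⟨h1, h2⟩; exact ⟨⟨a, h2⟩, h1, rfl⟩
  rw [← Nat.card_Ico m nr, ← himg, Finset.card_image_of_injective _ Fin.val_injective]

lemma pow_of_prod_ite {nr m : ℕ} (hm : m ≤ nr) (x : ℝ) :
    (∏ i : Fin nr, (if m ≤ (i : ℕ) then x else 1)) = x ^ (nr - m) := by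
  rw [Finset.prod_ite (fun _ => x) (fun _ => (1:ℝ)), Finset.prod_const, Finset.prod_const_one,
    mul_one, card_filter_le hm]

lemma biSBM_norm {nr nc Qr Qc : ℕ} (p : Fin Qr → ℝ) (r : Fin Qc → ℝ)
    (δ : Fin Qr → Fin Qc → ℝ) (hp1 : ∑ k, p k = 1) (hr1 : ∑ q, r q = 1) :
    ∑ A : Fin nr → Fin nc → Bool, biSBMprob p r δ A = 1 := by
  unfold biSBMprob
  rw [Finset.sum_comm]
  have h1 : ∀ Z : Fin nr → Fin Qr, ∀ W : Fin nc → Fin Qc,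
      ∑ A : Fin nr → Fin nc → Bool,
        (∏ i, p (Z i)) * (∏ j, r (W j)) *
          ∏ i, ∏ j, (if A i j then δ (Z i) (W j) else 1 - δ (Z i) (W j))
      = (∏ i, p (Z i)) * (∏ j, r (W j)) := by
    intro Z W
    rw [← Finset.mul_sum,
      sum_prod_pi2 (fun i j b => if b then δ (Z i) (W j) else 1 - δ (Z i) (W j))]
    have : ∀ i j, (∑ b : Bool, if b then δ (Z i) (W j) else 1 - δ (Z i) (W j)) = 1 := by
      intro i j; rw [Fintype.sum_bool]; ring_nf; simp
    simp only [this, Finset.prod_const_one, mul_one]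
  calc ∑ Z : Fin nr → Fin Qr, ∑ A : Fin nr → Fin nc → Bool, ∑ W : Fin nc → Fin Qc,
        (∏ i, p (Z i)) * (∏ j, r (W j)) *
          ∏ i, ∏ j, (if A i j then δ (Z i) (W j) else 1 - δ (Z i) (W j))
      = ∑ Z : Fin nr → Fin Qr, ∑ W : Fin nc → Fin Qc, ∑ A : Fin nr → Fin nc → Bool,
        (∏ i, p (Z i)) * (∏ j, r (W j)) *
          ∏ i, ∏ j, (if A i j then δ (Z i) (W j) else 1 - δ (Z i) (W j)) :=
        Finset.sum_congr rfl fun Z _ => Finset.sum_comm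
    _ = ∑ Z : Fin nr → Fin Qr, ∑ W : Fin nc → Fin Qc, (∏ i, p (Z i)) * (∏ j, r (W j)) := by
        exact Finset.sum_congr rfl fun Z _ => Finset.sum_congr rfl fun W _ => h1 Z W
    _ = (∑ Z : Fin nr → Fin Qr, ∏ i, p (Z i)) * (∑ W : Fin nc → Fin Qc, ∏ j, r (W j)) := by
        rw [Finset.sum_mul_sum]
    _ = 1 := by
        rw [sum_prod_pi (fun _ k => p k), sum_prod_pi (fun _ q => r q)]
        simp [hp1, hr1]

lemma exp_ind {nr nc Qr Qc : ℕ} (p : Fin Qr → ℝ) (r : Fin Qc → ℝ)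
    (δ : Fin Qr → Fin Qc → ℝ) (hp1 : ∑ k, p k = 1) (hr1 : ∑ q, r q = 1)
    (s : Equiv.Perm (Fin nr)) {m : ℕ} (hm : m ≤ nr) (j : Fin nc) :
    ∑ A : Fin nr → Fin nc → Bool, biSBMprob p r δ A *
        (if ∀ i : Fin nr, m ≤ (i : ℕ) → A (s i) j = false then (1 : ℝ) else 0)
      = ∑ q, r q * (1 - ∑ k, p k * δ k q) ^ (nr - m) := by
  have hind : ∀ A : Fin nr → Fin nc → Bool,
      (if ∀ i : Fin nr, m ≤ (i : ℕ) → A (s i) j = false then (1 : ℝ) else 0)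
      = ∏ i, ∏ j', (if j' = j ∧ m ≤ ((s.symm i : Fin nr) : ℕ)
          then (if A i j' then (0 : ℝ) else 1) else 1) := by
    intro A
    by_cases h : ∀ i : Fin nr, m ≤ (i : ℕ) → A (s i) j = false
    · rw [if_pos h]
      symm
      apply Finset.prod_eq_one; intro i _
      apply Finset.prod_eq_one; intro j' _
      split_ifs with h1 h2
      · exfalso
        obtain ⟨rfl, hmm⟩ := h1
        have h3 := h (s.symm i) hmm
        rw [Equiv.apply_symm_apply] at h3
        rw [h3] at h2
        exact Bool.false_ne_true h2
      · rfl
      · rfl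
    · rw [if_neg h]
      symm
      push_neg at h
      obtain ⟨i0, hmm, hA⟩ := h
      apply Finset.prod_eq_zero (Finset.mem_univ (s i0))
      apply Finset.prod_eq_zero (Finset.mem_univ j)
      have hs : ((s.symm (s i0) : Fin nr) : ℕ) = (i0 : ℕ) := by
        rw [Equiv.symm_apply_apply]
      rw [if_pos ⟨rfl, hs ▸ hmm⟩, if_pos (by simpa using hA)]
  calc ∑ A : Fin nr → Fin nc → Bool, biSBMprob p r δ A *
        (if ∀ i : Fin nr, m ≤ (i : ℕ) → A (s i) j = false then (1 : ℝ) else 0)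
      = ∑ A : Fin nr → Fin nc → Bool, ∑ Z : Fin nr → Fin Qr, ∑ W : Fin nc → Fin Qc,
          ((∏ i, p (Z i)) * (∏ j', r (W j'))) *
            ∏ i, ∏ j', ((if A i j' then δ (Z i) (W j') else 1 - δ (Z i) (W j')) *
              (if j' = j ∧ m ≤ ((s.symm i : Fin nr) : ℕ)
                then (if A i j' then (0 : ℝ) else 1) else 1)) := by
        apply Finset.sum_congr rfl; intro A _
        rw [biSBMprob, Finset.sum_mul]
        apply Finset.sum_congr rfl; intro Z _
        rw [Finset.sum_mul]
        apply Finset.sum_congr rfl; intro W _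
        rw [hind A, mul_assoc]
        congr 1
        rw [← Finset.prod_mul_distrib]
        exact Finset.prod_congr rfl fun i _ => (Finset.prod_mul_distrib).symm
    _ = ∑ Z : Fin nr → Fin Qr, ∑ W : Fin nc → Fin Qc,
          ((∏ i, p (Z i)) * (∏ j', r (W j'))) *
            ∏ i, ∏ j', (if j' = j ∧ m ≤ ((s.symm i : Fin nr) : ℕ)
              then 1 - δ (Z i) (W j') else 1) := by
        rw [Finset.sum_comm]
        apply Finset.sum_congr rfl; intro Z _
        rw [Finset.sum_comm]
        apply Finset.sum_congr rfl; intro W _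
        rw [← Finset.mul_sum,
          sum_prod_pi2 (fun i j' b => (if b then δ (Z i) (W j') else 1 - δ (Z i) (W j')) *
            (if j' = j ∧ m ≤ ((s.symm i : Fin nr) : ℕ) then (if b then (0 : ℝ) else 1) else 1))]
        congr 1
        apply Finset.prod_congr rfl; intro i _
        apply Finset.prod_congr rfl; intro j' _
        rw [Fintype.sum_bool]
        by_cases hc : j' = j ∧ m ≤ ((s.symm i : Fin nr) : ℕ) <;> simp [hc] <;> ring
    _ = ∑ Z : Fin nr → Fin Qr, ∑ W : Fin nc → Fin Qc,
          ((∏ i, p (Z i)) * (∏ j', r (W j'))) *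
            ∏ i, (if m ≤ ((s.symm i : Fin nr) : ℕ) then 1 - δ (Z i) (W j) else 1) := by
        apply Finset.sum_congr rfl; intro Z _
        apply Finset.sum_congr rfl; intro W _
        congr 1
        apply Finset.prod_congr rfl; intro i _
        by_cases hc : m ≤ ((s.symm i : Fin nr) : ℕ)
        · simp only [hc, and_true, if_pos]
          exact Fintype.prod_ite_eq' j (fun j' => 1 - δ (Z i) (W j'))
        · simp [hc]
    _ = ∑ W : Fin nc → Fin Qc, (∏ j', r (W j')) *
          (1 - ∑ k, p k * δ k (W j)) ^ (nr - m) := by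
        rw [Finset.sum_comm]
        apply Finset.sum_congr rfl; intro W _
        have hZ : ∀ Z : Fin nr → Fin Qr,
            ((∏ i, p (Z i)) * (∏ j', r (W j'))) *
              ∏ i, (if m ≤ ((s.symm i : Fin nr) : ℕ) then 1 - δ (Z i) (W j) else 1)
            = (∏ j', r (W j')) *
              ∏ i, (p (Z i) * (if m ≤ ((s.symm i : Fin nr) : ℕ) then 1 - δ (Z i) (W j) else 1)) := by
          intro Z
          rw [Finset.prod_mul_distrib]
          ring
        rw [Finset.sum_congr rfl fun Z _ => hZ Z, ← Finset.mul_sum,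
          sum_prod_pi (κ := Fin Qr) (fun i k =>
            p k * (if m ≤ ((s.symm i : Fin nr) : ℕ) then 1 - δ k (W j) else 1))]
        congr 1
        have hper : ∀ i : Fin nr,
            (∑ k, p k * (if m ≤ ((s.symm i : Fin nr) : ℕ) then 1 - δ k (W j) else 1))
            = (if m ≤ ((s.symm i : Fin nr) : ℕ) then 1 - ∑ k, p k * δ k (W j) else 1) := by
          intro i
          by_cases hc : m ≤ ((s.symm i : Fin nr) : ℕ)
          · simp only [hc, if_pos, if_true, mul_sub, mul_one, Finset.sum_sub_distrib, hp1]
          · simp [hc, hp1]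
        rw [Finset.prod_congr rfl fun i _ => hper i,
          Equiv.prod_comp s.symm (fun i0 => if m ≤ ((i0 : Fin nr) : ℕ)
            then 1 - ∑ k, p k * δ k (W j) else 1),
          pow_of_prod_ite hm]
    _ = ∑ q, r q * (1 - ∑ k, p k * δ k q) ^ (nr - m) := by
        have hW : ∀ W : Fin nc → Fin Qc,
            (∏ j', r (W j')) * (1 - ∑ k, p k * δ k (W j)) ^ (nr - m)
            = ∏ j', (r (W j') *
                (if j' = j then (1 - ∑ k, p k * δ k (W j')) ^ (nr - m) else 1)) := by
          intro W
          rw [Finset.prod_mul_distrib,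
            Fintype.prod_ite_eq' j (fun j' => (1 - ∑ k, p k * δ k (W j')) ^ (nr - m))]
        rw [Finset.sum_congr rfl fun W _ => hW W,
          sum_prod_pi (κ := Fin Qc) (fun j' q =>
            r q * (if j' = j then (1 - ∑ k, p k * δ k q) ^ (nr - m) else 1))]
        have hper : ∀ j' : Fin nc,
            (∑ q, r q * (if j' = j then (1 - ∑ k, p k * δ k q) ^ (nr - m) else 1))
            = (if j' = j then ∑ q, r q * (1 - ∑ k, p k * δ k q) ^ (nr - m) else 1) := by
          intro j'
          by_cases hc : j' = j
          · simp [hc]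
          · simp [hc, hr1]
        rw [Finset.prod_congr rfl fun j' _ => hper j',
          Fintype.prod_ite_eq' j (fun _ => ∑ q, r q * (1 - ∑ k, p k * δ k q) ^ (nr - m))]


set_option maxHeartbeats 1000000 in
theorem stmt_3 {nr nc Qr Qc : ℕ} (hnc : 0 < nc) (hnr : 0 < nr)
    (p : Fin Qr → ℝ) (r : Fin Qc → ℝ) (δ : Fin Qr → Fin Qc → ℝ)
    (hp0 : ∀ k, 0 ≤ p k) (hp1 : ∑ k, p k = 1)
    (hr0 : ∀ q, 0 ≤ r q) (hr1 : ∑ q, r q = 1)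
    (hδ : ∀ k q, 0 < δ k q ∧ δ k q < 1)
    (hδp : ∀ q, 0 < ∑ k, p k * δ k q) :
    -- (1/n_r) Σ_{m=0}^{n_r} E[R(A,S,m)]  (S uniform, independent of A)
    (nr : ℝ)⁻¹ *
        ∑ m ∈ Finset.range (nr + 1),
          ((Nat.factorial nr : ℝ))⁻¹ *
            ∑ s : Equiv.Perm (Fin nr),
              ∑ A : Fin nr → Fin nc → Bool, biSBMprob p r δ A * rob A s m
      = 1 - (nr : ℝ)⁻¹ *
          ∑ q, r q *
            (((1 - ∑ k, p k * δ k q) - (1 - ∑ k, p k * δ k q) ^ (nr + 1)) /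
              (∑ k, p k * δ k q)) := by
  set D : Fin Qc → ℝ := fun q => ∑ k, p k * δ k q with hD
  set x : Fin Qc → ℝ := fun q => 1 - D q with hxdef
  -- expectation over A for fixed s, m
  have hA : ∀ (s : Equiv.Perm (Fin nr)) (m : ℕ), m ≤ nr →
      (∑ A : Fin nr → Fin nc → Bool, biSBMprob p r δ A * rob A s m)
        = 1 - ∑ q, r q * x q ^ (nr - m) := by
    intro s m hm
    calc ∑ A : Fin nr → Fin nc → Bool, biSBMprob p r δ A * rob A s m
        = ∑ A : Fin nr → Fin nc → Bool, (biSBMprob p r δ A -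
            (nc : ℝ)⁻¹ * ∑ j : Fin nc, biSBMprob p r δ A *
              (if ∀ i : Fin nr, m ≤ (i : ℕ) → A (s i) j = false then (1 : ℝ) else 0)) := by
          apply Finset.sum_congr rfl; intro A _
          rw [rob, ← Finset.mul_sum]
          ring
      _ = (∑ A : Fin nr → Fin nc → Bool, biSBMprob p r δ A) -
            (nc : ℝ)⁻¹ * ∑ A : Fin nr → Fin nc → Bool, ∑ j : Fin nc, biSBMprob p r δ A *
              (if ∀ i : Fin nr, m ≤ (i : ℕ) → A (s i) j = false then (1 : ℝ) else 0) := by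
          rw [Finset.sum_sub_distrib, ← Finset.mul_sum]
      _ = 1 - (nc : ℝ)⁻¹ * ∑ j : Fin nc, (∑ q, r q * x q ^ (nr - m)) := by
          rw [biSBM_norm p r δ hp1 hr1, Finset.sum_comm]
          congr 1
          rw [Finset.sum_congr rfl fun j _ => exp_ind p r δ hp1 hr1 s hm j]
      _ = 1 - ∑ q, r q * x q ^ (nr - m) := by
          rw [Finset.sum_const, Finset.card_univ, Fintype.card_fin, nsmul_eq_mul]
          have : (nc : ℝ) ≠ 0 := Nat.cast_ne_zero.mpr hnc.ne'
          field_simp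
  -- average over permutations
  have hS : ∀ m : ℕ, m ≤ nr →
      ((Nat.factorial nr : ℝ))⁻¹ * ∑ s : Equiv.Perm (Fin nr),
          ∑ A : Fin nr → Fin nc → Bool, biSBMprob p r δ A * rob A s m
        = 1 - ∑ q, r q * x q ^ (nr - m) := by
    intro m hm
    rw [Finset.sum_congr rfl fun s _ => hA s m hm, Finset.sum_const, Finset.card_univ,
      Fintype.card_perm, Fintype.card_fin, nsmul_eq_mul]
    have : ((Nat.factorial nr : ℝ)) ≠ 0 := Nat.cast_ne_zero.mpr (Nat.factorial_ne_zero nr)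
    field_simp
  rw [Finset.sum_congr rfl fun m hmem => hS m (Nat.lt_succ_iff.mp (Finset.mem_range.mp hmem))]
  -- now pure algebra
  have hx1 : ∀ q, x q ≠ 1 := by
    intro q h
    have := hδp q
    rw [hxdef] at h
    simp only at h
    nlinarith [hδp q]
  have hgeom : ∀ q, ∑ m ∈ Finset.range (nr + 1), x q ^ (nr - m)
      = (x q ^ (nr + 1) - 1) / (x q - 1) := by
    intro q
    rw [← geom_sum_eq (hx1 q) (nr + 1), ← Finset.sum_range_reflect (fun t => x q ^ t) (nr + 1)]
    apply Finset.sum_congr rfl; intro m hmem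
    congr 1
  have hsum : ∑ m ∈ Finset.range (nr + 1), (1 - ∑ q, r q * x q ^ (nr - m))
      = ((nr : ℝ) + 1) - ∑ q, r q * ((x q ^ (nr + 1) - 1) / (x q - 1)) := by
    rw [Finset.sum_sub_distrib, Finset.sum_const, Finset.card_range, nsmul_eq_mul, mul_one,
      Finset.sum_comm]
    push_cast
    congr 1
    apply Finset.sum_congr rfl; intro q _
    rw [← Finset.mul_sum, hgeom q]
  rw [hsum]
  -- per-q identity
  have hper : ∀ q, r q * ((x q ^ (nr + 1) - 1) / (x q - 1))
      = r q * ((x q - x q ^ (nr + 1)) / D q) + r q := by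
    intro q
    have hDq : D q ≠ 0 := (hδp q).ne'
    have hx : x q - 1 = -D q := by rw [hxdef]; ring
    rw [hx, div_neg, ← neg_div, neg_sub]
    have h2 : (1 : ℝ) - x q ^ (nr + 1) = (x q - x q ^ (nr + 1)) + D q := by ring
    rw [h2, add_div, div_self hDq, mul_add, mul_one]
  rw [Finset.sum_congr rfl fun q _ => hper q, Finset.sum_add_distrib, hr1]
  have hnr' : (nr : ℝ) ≠ 0 := Nat.cast_ne_zero.mpr hnr.ne'
  field_simp
  simp only [hxdef, hD]
  ring
end

section
/- Let (A,S) follow a biSBM with parameters (π, ρ, δ) coupled with block-ordered extinction sequences: given the row labels Z, the permutation S is uniform over all permutations s satisfying Z_{s(1)} ≤ ... ≤ Z_{s(n_r)}. Then for every m ∈ {0,...,n_r}, E[R(A,S,m)] = 1 - Σ_{q=1}^{Q_c} ρ_q Σ_{n_1+...+n_{Q_r}=n_r} (n_r! / (n_1!···n_{Q_r}!)) Π_{k=1}^{Q_r} π_k^{n_k} (1 - δ_{kq})^{min⁺(n_k, Σ_{l≤k} n_l - m)}, where min⁺(x,y) = max(0, min(x,y)). -/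
open Finset

/-- Conditional probability of the incidence matrix `A` given the latent
row labels `Z` and column labels `W` (independent Bernoulli entries). -/
def condProb {nr nc Qr Qc : ℕ} (δ : Fin Qr → Fin Qc → ℝ)
    (Z : Fin nr → Fin Qr) (W : Fin nc → Fin Qc)
    (A : Fin nr → Fin nc → Bool) : ℝ :=
  ∏ i, ∏ j, (if A i j then δ (Z i) (W j) else 1 - δ (Z i) (W j))

/-- The block-ordered extinction sequences: permutations `s` along which the
row labels `Z ∘ s` are nondecreasing. -/
def blockSeqs {nr Qr : ℕ} (Z : Fin nr → Fin Qr) :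
    Finset (Equiv.Perm (Fin nr)) :=
  Finset.univ.filter (fun s => Monotone (fun i => Z (s i)))

private lemma sum_pi_prod {ι κ : Type*} [Fintype ι] [DecidableEq ι] [Fintype κ]
    (F : ι → κ → ℝ) : ∑ g : ι → κ, ∏ i, F i (g i) = ∏ i, ∑ x, F i x := by
  rw [Finset.prod_univ_sum, Fintype.piFinset_univ]

private lemma sum_matrix_prod {nr nc : ℕ} (h : Fin nr → Fin nc → Bool → ℝ) :
    ∑ A : Fin nr → Fin nc → Bool, ∏ i, ∏ j, h i j (A i j)
      = ∏ i, ∏ j, (h i j true + h i j false) := by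
  have h1 := sum_pi_prod (fun i (row : Fin nc → Bool) => ∏ j, h i j (row j))
  beta_reduce at h1
  rw [h1]
  refine Finset.prod_congr rfl fun i _ => ?_
  have h2 := sum_pi_prod (fun (j : Fin nc) (b : Bool) => h i j b)
  beta_reduce at h2
  rw [h2]
  exact Finset.prod_congr rfl fun j _ => Fintype.sum_bool _

private def cnt {nr Qr : ℕ} (Z : Fin nr → Fin Qr) : Fin Qr → ℕ :=
  fun k => (univ.filter (fun i => Z i = k)).card

private lemma cnt_comp {nr Qr : ℕ} (Z : Fin nr → Fin Qr) (s : Equiv.Perm (Fin nr))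
    (k : Fin Qr) :
    (univ.filter (fun i => Z (s i) = k)).card = cnt Z k := by
  apply Finset.card_bij (fun i _ => s i)
  · intro a ha; simp only [mem_filter, mem_univ, true_and] at ha ⊢; exact ha
  · intro a _ b _ h; exact s.injective h
  · intro b hb
    simp only [mem_filter, mem_univ, true_and] at hb
    exact ⟨s.symm b, by simp [hb], by simp⟩

private lemma sum_cnt {nr Qr : ℕ} (Z : Fin nr → Fin Qr) : ∑ k, cnt Z k = nr := by
  have := Finset.card_eq_sum_card_fiberwise (f := Z) (s := univ) (t := univ)
    (fun i _ => mem_univ _)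
  rw [card_univ, Fintype.card_fin] at this
  exact this.symm

private lemma exists_cnt {nr Qr : ℕ} (n : Fin Qr → ℕ) (hn : ∑ k, n k = nr) :
    ∃ Z : Fin nr → Fin Qr, cnt Z = n := by
  have hcard : Fintype.card (Σ k : Fin Qr, Fin (n k)) = Fintype.card (Fin nr) := by
    simp [Fintype.card_sigma, hn]
  let e : (Σ k : Fin Qr, Fin (n k)) ≃ Fin nr := Fintype.equivOfCardEq hcard
  refine ⟨fun i => (e.symm i).1, ?_⟩
  funext k
  show (univ.filter (fun i => (e.symm i).1 = k)).card = n k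
  rw [← Fintype.card_subtype]
  have e1 : {i : Fin nr // (e.symm i).1 = k} ≃ {x : Σ l : Fin Qr, Fin (n l) // x.1 = k} :=
    e.symm.subtypeEquiv (fun i => Iff.rfl)
  rw [Fintype.card_congr e1]
  have e2 : Fin (n k) ≃ {x : Σ l : Fin Qr, Fin (n l) // x.1 = k} :=
    { toFun := fun j => ⟨⟨k, j⟩, rfl⟩
      invFun := fun x => Fin.cast (congrArg n x.2) x.1.2
      left_inv := fun j => rfl
      right_inv := fun x => by
        rcases x with ⟨⟨l, j⟩, h⟩
        subst h
        rfl }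
  rw [← Fintype.card_congr e2, Fintype.card_fin]

private lemma card_stab {nr Qr : ℕ} (Z : Fin nr → Fin Qr) :
    (univ.filter (fun g : Equiv.Perm (Fin nr) => ∀ i, Z (g i) = Z i)).card
      = ∏ k, (cnt Z k).factorial := by
  classical
  rw [← Fintype.card_subtype]
  have e1 : {g : Equiv.Perm (Fin nr) // ∀ i, Z (g i) = Z i}
      ≃ {g : Equiv.Perm (Fin nr) // Z ∘ g = Z} :=
    Equiv.subtypeEquivRight (fun g => by
      constructor
      · intro h; funext i; exact h i
      · intro h i; exact congrFun h i)
  rw [Fintype.card_congr e1, DomMulAct.stabilizer_card]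
  exact Finset.prod_congr rfl fun k _ => by rw [Fintype.card_subtype]; rfl

private lemma card_fiber {nr Qr : ℕ} (Z₀ Z : Fin nr → Fin Qr) (h : cnt Z = cnt Z₀) :
    (univ.filter (fun σ : Equiv.Perm (Fin nr) => (fun i => Z₀ (σ i)) = Z)).card
      = ∏ k, (cnt Z₀ k).factorial := by
  classical
  -- there exists σ₀ with Z₀ ∘ σ₀ = Z
  have he : ∀ k : Fin Qr, {i : Fin nr // Z i = k} ≃ {i : Fin nr // Z₀ i = k} := by
    intro k
    apply Fintype.equivOfCardEq
    rw [Fintype.card_subtype, Fintype.card_subtype]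
    have := congrFun h k
    exact this
  let σ₀ : Fin nr ≃ Fin nr := Equiv.ofFiberEquiv (f := Z) (g := Z₀) he
  have hσ₀ : ∀ i, Z₀ (σ₀ i) = Z i := fun i => Equiv.ofFiberEquiv_map he i
  -- bijection with the stabilizer of Z
  rw [← card_stab Z₀]
  apply Finset.card_bij (fun σ _ => σ₀.symm.trans σ)
  · intro σ hσ
    simp only [mem_filter, mem_univ, true_and] at hσ ⊢
    intro i
    show Z₀ (σ (σ₀.symm i)) = Z₀ i
    have h1 : (fun i => Z₀ (σ i)) = Z := hσ
    have h2 := congrFun h1 (σ₀.symm i)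
    rw [h2]
    calc Z (σ₀.symm i) = Z₀ (σ₀ (σ₀.symm i)) := (hσ₀ _).symm
      _ = Z₀ i := by rw [Equiv.apply_symm_apply]
  · intro a _ b _ hab
    refine Equiv.ext fun i => ?_
    have h2 : (σ₀.symm.trans a) (σ₀ i) = (σ₀.symm.trans b) (σ₀ i) := by rw [hab]
    simpa using h2
  · intro b hb
    simp only [mem_filter, mem_univ, true_and] at hb
    refine ⟨σ₀.trans b, ?_, ?_⟩
    · simp only [mem_filter, mem_univ, true_and]
      funext i
      show Z₀ (b (σ₀ i)) = Z i
      rw [hb (σ₀ i), hσ₀]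
    · refine Equiv.ext fun i => ?_
      simp

private lemma card_cnt_eq {nr Qr : ℕ} (n : Fin Qr → ℕ) (hn : ∑ k, n k = nr) :
    ((univ : Finset (Fin nr → Fin Qr)).filter (fun Z => cnt Z = n)).card
      = Nat.multinomial univ n := by
  classical
  obtain ⟨Z₀, hZ₀⟩ := exists_cnt n hn
  have hmaps : ∀ σ ∈ (univ : Finset (Equiv.Perm (Fin nr))),
      (fun i => Z₀ (σ i)) ∈ (univ : Finset (Fin nr → Fin Qr)).filter (fun Z => cnt Z = n) := by
    intro σ _
    simp only [mem_filter, mem_univ, true_and]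
    funext k
    show (univ.filter (fun i => Z₀ (σ i) = k)).card = n k
    rw [cnt_comp Z₀ σ k]
    exact congrFun hZ₀ k
  have hkey := Finset.card_eq_sum_card_fiberwise hmaps
  rw [card_univ, Fintype.card_perm, Fintype.card_fin] at hkey
  have hfib : ∀ Z ∈ (univ : Finset (Fin nr → Fin Qr)).filter (fun Z => cnt Z = n),
      (univ.filter (fun σ : Equiv.Perm (Fin nr) => (fun i => Z₀ (σ i)) = Z)).card
        = ∏ k, (n k).factorial := by
    intro Z hZ
    rw [mem_filter] at hZ
    rw [card_fiber Z₀ Z (by rw [hZ.2, hZ₀])]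
    rw [hZ₀]
  rw [Finset.sum_congr rfl hfib, Finset.sum_const, smul_eq_mul] at hkey
  have spec := Nat.multinomial_spec univ n
  rw [hn] at spec
  have hpos : 0 < ∏ k, (n k).factorial := Finset.prod_pos (fun k _ => Nat.factorial_pos _)
  apply Nat.eq_of_mul_eq_mul_right hpos
  calc ((univ : Finset (Fin nr → Fin Qr)).filter (fun Z => cnt Z = n)).card * ∏ k, (n k).factorial
      = nr.factorial := hkey.symm
    _ = Nat.multinomial univ n * ∏ k, (n k).factorial := by rw [mul_comm]; exact spec.symm

private lemma card_filter_Ico {nr : ℕ} (a b : ℕ) (hb : b ≤ nr) :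
    (univ.filter (fun i : Fin nr => a ≤ (i:ℕ) ∧ (i:ℕ) < b)).card = b - a := by
  rw [← Nat.card_Ico a b]
  apply Finset.card_bij (fun (i : Fin nr) _ => (i : ℕ))
  · intro i hi; simp only [mem_filter] at hi; exact mem_Ico.mpr ⟨hi.2.1, hi.2.2⟩
  · intro x _ y _ hxy; exact Fin.ext hxy
  · intro x hx
    rw [mem_Ico] at hx
    exact ⟨⟨x, lt_of_lt_of_le hx.2 hb⟩, by simp [hx.1, hx.2], rfl⟩

private lemma downclosed_eq {n : ℕ} (s : Finset (Fin n))
    (hs : ∀ i j : Fin n, i ≤ j → j ∈ s → i ∈ s) :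
    s = univ.filter (fun i : Fin n => (i : ℕ) < s.card) := by
  ext i
  simp only [mem_filter, mem_univ, true_and]
  constructor
  · intro h
    have hsub : Finset.Iic i ⊆ s := fun j hj => hs j i (mem_Iic.mp hj) h
    have := Finset.card_le_card hsub
    rw [Fin.card_Iic] at this; omega
  · intro h
    by_contra hi
    have hsub : s ⊆ Finset.Iio i := by
      intro j hj
      rw [mem_Iio]
      rcases lt_or_ge j i with h' | h'
      · exact h'
      · exact absurd (hs i j h' hj) hi
    have := Finset.card_le_card hsub
    rw [Fin.card_Iio] at this; omega

private lemma count_tail {nr Qr : ℕ} (m : ℕ) (g : Fin nr → Fin Qr) (hg : Monotone g)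
    (k : Fin Qr) :
    ((univ.filter (fun i : Fin nr => m ≤ (i:ℕ))).filter (fun i => g i = k)).card
      = min ((univ.filter (fun i => g i = k)).card)
          ((∑ l ∈ Iic k, (univ.filter (fun i => g i = l)).card) - m) := by
  classical
  set sle := univ.filter (fun i => g i ≤ k) with hsle
  set slt := univ.filter (fun i => g i < k) with hslt
  set sk := univ.filter (fun i => g i = k) with hsk
  have hle : ∀ i : Fin nr, g i ≤ k ↔ (i : ℕ) < sle.card := by
    intro i
    have hdc := downclosed_eq sle (fun a b hab hb => by
      rw [hsle, mem_filter] at hb ⊢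
      exact ⟨mem_univ _, le_trans (hg hab) hb.2⟩)
    constructor
    · intro h
      have : i ∈ sle := by rw [hsle, mem_filter]; exact ⟨mem_univ _, h⟩
      rw [hdc, mem_filter] at this; exact this.2
    · intro h
      have : i ∈ sle := by rw [hdc, mem_filter]; exact ⟨mem_univ _, h⟩
      rw [hsle, mem_filter] at this; exact this.2
  have hlt : ∀ i : Fin nr, g i < k ↔ (i : ℕ) < slt.card := by
    intro i
    have hdc := downclosed_eq slt (fun a b hab hb => by
      rw [hslt, mem_filter] at hb ⊢
      exact ⟨mem_univ _, lt_of_le_of_lt (hg hab) hb.2⟩)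
    constructor
    · intro h
      have : i ∈ slt := by rw [hslt, mem_filter]; exact ⟨mem_univ _, h⟩
      rw [hdc, mem_filter] at this; exact this.2
    · intro h
      have : i ∈ slt := by rw [hdc, mem_filter]; exact ⟨mem_univ _, h⟩
      rw [hslt, mem_filter] at this; exact this.2
  have hsplit : sle.card = slt.card + sk.card := by
    have hunion : sle = slt ∪ sk := by
      rw [hsle, hslt, hsk, ← Finset.filter_or]
      exact Finset.filter_congr (fun i _ => by
        constructor
        · exact fun h => lt_or_eq_of_le h
        · rintro (h | h); exacts [le_of_lt h, le_of_eq h])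
    rw [hunion, Finset.card_union_of_disjoint]
    rw [Finset.disjoint_left]
    intro i hi hik
    rw [hslt, mem_filter] at hi
    rw [hsk, mem_filter] at hik
    exact absurd (hik.2 ▸ hi.2) (lt_irrefl k)
  have hc1sum : sle.card = ∑ l ∈ Iic k, (univ.filter (fun i => g i = l)).card := by
    have := Finset.card_eq_sum_card_fiberwise (f := g) (s := sle) (t := Iic k)
      (fun i hi => by have hi' : g i ≤ k := (by simpa [hsle] using hi); exact Finset.mem_coe.mpr (mem_Iic.mpr hi'))
    rw [this]
    refine Finset.sum_congr rfl fun l hl => ?_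
    congr 1
    rw [hsle, Finset.filter_filter]
    exact Finset.filter_congr (fun i _ => by
      constructor
      · exact fun h => h.2
      · exact fun h => ⟨h ▸ mem_Iic.mp hl, h⟩)
  have hc1le : sle.card ≤ nr := by
    rw [hsle]
    calc (univ.filter (fun i => g i ≤ k)).card ≤ (univ : Finset (Fin nr)).card :=
          Finset.card_filter_le _ _
      _ = nr := by rw [card_univ, Fintype.card_fin]
  have htarget : (univ.filter (fun i : Fin nr => m ≤ (i:ℕ))).filter (fun i => g i = k)
      = univ.filter (fun i : Fin nr => max m slt.card ≤ (i:ℕ) ∧ (i:ℕ) < sle.card) := by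
    rw [Finset.filter_filter]
    refine Finset.filter_congr (fun i _ => ?_)
    constructor
    · rintro ⟨hm, hk⟩
      have h1 : (i : ℕ) < sle.card := (hle i).mp (le_of_eq hk)
      have h2 : ¬ (i : ℕ) < slt.card :=
        fun hc => absurd ((hlt i).mpr hc) (by rw [hk]; exact lt_irrefl k)
      omega
    · rintro ⟨h1, h2⟩
      have hm : m ≤ (i : ℕ) := le_trans (le_max_left _ _) h1
      have hc0 : slt.card ≤ (i : ℕ) := le_trans (le_max_right _ _) h1
      have hk1 : g i ≤ k := (hle i).mpr h2
      have hk2 : ¬ g i < k := fun hc => absurd ((hlt i).mp hc) (by omega)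
      exact ⟨hm, le_antisymm hk1 (not_lt.mp hk2)⟩
  rw [htarget, card_filter_Ico _ _ hc1le, ← hc1sum]
  omega

private lemma prod_block {nr Qr Qc : ℕ} (m : ℕ) (δ : Fin Qr → Fin Qc → ℝ)
    (Z : Fin nr → Fin Qr) (s : Equiv.Perm (Fin nr))
    (hs : Monotone (fun i => Z (s i))) (q : Fin Qc) :
    ∏ i ∈ univ.filter (fun i : Fin nr => m ≤ (i:ℕ)), (1 - δ (Z (s i)) q)
      = ∏ k, (1 - δ k q) ^ (min (cnt Z k) ((∑ l ∈ Iic k, cnt Z l) - m)) := by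
  classical
  rw [← Finset.prod_fiberwise_of_maps_to
    (fun i (_ : i ∈ univ.filter (fun i : Fin nr => m ≤ (i:ℕ))) => mem_univ (Z (s i)))
    (fun i => 1 - δ (Z (s i)) q)]
  refine Finset.prod_congr rfl fun k _ => ?_
  calc ∏ i ∈ (univ.filter (fun i : Fin nr => m ≤ (i:ℕ))).filter (fun i => Z (s i) = k),
        (1 - δ (Z (s i)) q)
      = ∏ i ∈ (univ.filter (fun i : Fin nr => m ≤ (i:ℕ))).filter (fun i => Z (s i) = k),
        (1 - δ k q) :=
        Finset.prod_congr rfl (fun i hi => by rw [(Finset.mem_filter.mp hi).2])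
    _ = (1 - δ k q) ^
        ((univ.filter (fun i : Fin nr => m ≤ (i:ℕ))).filter (fun i => Z (s i) = k)).card :=
        Finset.prod_const _
    _ = (1 - δ k q) ^ (min (cnt Z k) ((∑ l ∈ Iic k, cnt Z l) - m)) := by
        rw [count_tail m (fun i => Z (s i)) hs k, cnt_comp Z s k,
          Finset.sum_congr rfl (fun l _ => cnt_comp Z s l)]

private lemma prod_comp_cnt {nr Qr : ℕ} (Z : Fin nr → Fin Qr) (f : Fin Qr → ℝ) :
    ∏ i, f (Z i) = ∏ k, f k ^ cnt Z k := by
  rw [← Finset.prod_fiberwise_of_maps_to (fun i (_ : i ∈ univ) => mem_univ (Z i))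
    (fun i => f (Z i))]
  refine Finset.prod_congr rfl fun k _ => ?_
  calc ∏ i ∈ univ.filter (fun i => Z i = k), f (Z i)
      = ∏ i ∈ univ.filter (fun i => Z i = k), f k :=
        Finset.prod_congr rfl (fun i hi => by rw [(Finset.mem_filter.mp hi).2])
    _ = f k ^ cnt Z k := by rw [Finset.prod_const]; rfl

private lemma sum_W {nc Qc : ℕ} (r : Fin Qc → ℝ) (hr1 : ∑ q, r q = 1)
    (P : Fin Qc → ℝ) (j₀ : Fin nc) :
    ∑ W : Fin nc → Fin Qc, (∏ j, r (W j)) * P (W j₀) = ∑ q, r q * P q := by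
  have h1 : ∀ W : Fin nc → Fin Qc, (∏ j, r (W j)) * P (W j₀)
      = ∏ j, (r (W j) * if j = j₀ then P (W j) else 1) := by
    intro W
    rw [Finset.prod_mul_distrib, Finset.prod_ite_eq' univ j₀ (fun j => P (W j))]
    simp
  rw [Finset.sum_congr rfl (fun W _ => h1 W),
    sum_pi_prod (fun (j : Fin nc) (c : Fin Qc) => r c * if j = j₀ then P c else 1)]
  have h2 : ∀ j : Fin nc, (∑ c, r c * if j = j₀ then P c else 1)
      = if j = j₀ then ∑ c, r c * P c else 1 := by
    intro jj; by_cases h : jj = j₀ <;> simp [h, hr1]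
  rw [Finset.prod_congr rfl (fun jj _ => h2 jj),
    Finset.prod_ite_eq' univ j₀ (fun _ => ∑ c, r c * P c)]
  simp

private lemma prod_prod_ite {nr nc : ℕ} (E : Finset (Fin nr)) (j : Fin nc)
    (χ : Fin nr → Fin nc → ℝ) :
    (∏ i', ∏ j', if i' ∈ E ∧ j' = j then χ i' j' else 1) = ∏ i' ∈ E, χ i' j := by
  have step1 : ∀ i' : Fin nr,
      (∏ j', if i' ∈ E ∧ j' = j then χ i' j' else 1) = (if i' ∈ E then χ i' j else 1) := by
    intro i'
    by_cases hx : i' ∈ E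
    · simp only [hx, true_and]
      rw [Finset.prod_ite_eq' univ j (fun j' => χ i' j')]
      simp
    · simp [hx]
  rw [Finset.prod_congr rfl (fun i' _ => step1 i'), Finset.prod_ite_mem, univ_inter]


private lemma sum_prob_one {nc Qc : ℕ} (r : Fin Qc → ℝ) (hr1 : ∑ q, r q = 1) :
    ∑ W : Fin nc → Fin Qc, (∏ j, r (W j)) = 1 := by
  have := sum_pi_prod (fun (_ : Fin nc) (c : Fin Qc) => r c)
  beta_reduce at this
  rw [this]
  simp [hr1]

private lemma sum_condProb_ind {nr nc Qr Qc : ℕ} (δ : Fin Qr → Fin Qc → ℝ)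
    (Z : Fin nr → Fin Qr) (W : Fin nc → Fin Qc) (s : Equiv.Perm (Fin nr)) (m : ℕ)
    (j : Fin nc) :
    ∑ A : Fin nr → Fin nc → Bool, condProb δ Z W A *
        (if ∀ i : Fin nr, m ≤ (i : ℕ) → A (s i) j = false then (1:ℝ) else 0)
      = ∏ i ∈ univ.filter (fun i : Fin nr => m ≤ (i:ℕ)), (1 - δ (Z (s i)) (W j)) := by
  classical
  set F : Finset (Fin nr) := univ.filter (fun i : Fin nr => m ≤ (i:ℕ)) with hF
  set E : Finset (Fin nr) := F.image s with hE
  have hinj : Set.InjOn s F := fun a _ b _ h => s.injective h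
  have hind : ∀ A : Fin nr → Fin nc → Bool,
      (if ∀ i : Fin nr, m ≤ (i:ℕ) → A (s i) j = false then (1:ℝ) else 0)
        = ∏ i' ∈ E, (if A i' j then (0:ℝ) else 1) := by
    intro A
    rw [hE, Finset.prod_image hinj]
    by_cases h : ∀ i : Fin nr, m ≤ (i:ℕ) → A (s i) j = false
    · rw [if_pos h]
      refine (Finset.prod_eq_one ?_).symm
      intro i hi
      rw [hF, mem_filter] at hi
      rw [h i hi.2]
      simp
    · rw [if_neg h]
      push_neg at h
      obtain ⟨i, hi, hA⟩ := h
      refine (Finset.prod_eq_zero (by rw [hF, mem_filter]; exact ⟨mem_univ _, hi⟩) ?_).symm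
      simp only [Bool.not_eq_false] at hA
      rw [if_pos hA]
  set h : Fin nr → Fin nc → Bool → ℝ := fun i' j' b =>
    (if b then δ (Z i') (W j') else 1 - δ (Z i') (W j')) *
      (if i' ∈ E ∧ j' = j then (if b then 0 else 1) else 1) with hh
  have hfact : ∀ A : Fin nr → Fin nc → Bool,
      condProb δ Z W A *
        (if ∀ i : Fin nr, m ≤ (i:ℕ) → A (s i) j = false then (1:ℝ) else 0)
      = ∏ i', ∏ j', h i' j' (A i' j') := by
    intro A
    rw [hind A]
    unfold condProb
    rw [hh]
    simp only [Finset.prod_mul_distrib]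
    congr 1
    exact (prod_prod_ite E j (fun i' j' => if A i' j' then (0:ℝ) else 1)).symm
  rw [Finset.sum_congr rfl (fun A _ => hfact A), sum_matrix_prod h]
  have hcollapse : ∀ i' j',
      h i' j' true + h i' j' false
        = (if i' ∈ E ∧ j' = j then 1 - δ (Z i') (W j') else 1) := by
    intro i' j'
    rw [hh]
    by_cases hc : i' ∈ E ∧ j' = j
    · simp [hc]
    · simp [hc]
  calc ∏ i', ∏ j', (h i' j' true + h i' j' false)
      = ∏ i', ∏ j', (if i' ∈ E ∧ j' = j then 1 - δ (Z i') (W j') else 1) :=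
        Finset.prod_congr rfl fun i' _ => Finset.prod_congr rfl fun j' _ => hcollapse i' j'
    _ = ∏ i' ∈ E, (1 - δ (Z i') (W j)) := prod_prod_ite E j _
    _ = ∏ i ∈ F, (1 - δ (Z (s i)) (W j)) := by rw [hE, Finset.prod_image hinj]

private lemma sum_condProb {nr nc Qr Qc : ℕ} (δ : Fin Qr → Fin Qc → ℝ)
    (Z : Fin nr → Fin Qr) (W : Fin nc → Fin Qc) :
    ∑ A : Fin nr → Fin nc → Bool, condProb δ Z W A = 1 := by
  unfold condProb
  rw [sum_matrix_prod (fun i j b => if b then δ (Z i) (W j) else 1 - δ (Z i) (W j))]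
  simp

private lemma per_s {nr nc Qr Qc : ℕ} (hnc : 0 < nc) (r : Fin Qc → ℝ)
    (hr1 : ∑ q, r q = 1) (δ : Fin Qr → Fin Qc → ℝ) (Z : Fin nr → Fin Qr)
    (s : Equiv.Perm (Fin nr)) (hs : Monotone (fun i => Z (s i))) (m : ℕ) :
    ∑ W : Fin nc → Fin Qc, (∏ j, r (W j)) *
        ∑ A : Fin nr → Fin nc → Bool, condProb δ Z W A * rob A s m
      = 1 - ∑ q, r q * ∏ k, (1 - δ k q) ^ (min (cnt Z k) ((∑ l ∈ Iic k, cnt Z l) - m)) := by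
  classical
  set P : Fin Qc → ℝ :=
    fun c => ∏ i ∈ univ.filter (fun i : Fin nr => m ≤ (i:ℕ)), (1 - δ (Z (s i)) c) with hP
  have hA : ∀ W : Fin nc → Fin Qc,
      (∑ A : Fin nr → Fin nc → Bool, condProb δ Z W A * rob A s m)
        = 1 - (nc:ℝ)⁻¹ * ∑ j, P (W j) := by
    intro W
    have h1 : ∀ A : Fin nr → Fin nc → Bool, condProb δ Z W A * rob A s m
        = condProb δ Z W A - (nc:ℝ)⁻¹ * ∑ j, condProb δ Z W A *
            (if ∀ i : Fin nr, m ≤ (i:ℕ) → A (s i) j = false then (1:ℝ) else 0) := by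
      intro A
      unfold rob
      rw [mul_sub, mul_one]
      congr 1
      rw [← Finset.mul_sum]
      ring
    rw [Finset.sum_congr rfl (fun A _ => h1 A), Finset.sum_sub_distrib,
      sum_condProb δ Z W, ← Finset.mul_sum, Finset.sum_comm]
    congr 2
    refine Finset.sum_congr rfl fun j _ => ?_
    rw [sum_condProb_ind δ Z W s m j]
  rw [Finset.sum_congr rfl (fun W _ => by rw [hA W])]
  have h2 : ∀ W : Fin nc → Fin Qc,
      (∏ j, r (W j)) * (1 - (nc:ℝ)⁻¹ * ∑ j, P (W j))
        = (∏ j, r (W j)) - (nc:ℝ)⁻¹ * ∑ j, (∏ j', r (W j')) * P (W j) := by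
    intro W
    rw [mul_sub, mul_one]
    congr 1
    rw [← Finset.mul_sum]
    ring
  rw [Finset.sum_congr rfl (fun W _ => h2 W), Finset.sum_sub_distrib,
    sum_prob_one r hr1, ← Finset.mul_sum, Finset.sum_comm]
  have h3 : ∀ j : Fin nc,
      (∑ W : Fin nc → Fin Qc, (∏ j', r (W j')) * P (W j)) = ∑ q, r q * P q :=
    fun j => sum_W r hr1 P j
  rw [Finset.sum_congr rfl (fun j _ => h3 j), Finset.sum_const, card_univ,
    Fintype.card_fin, nsmul_eq_mul, ← mul_assoc,
    inv_mul_cancel₀ (by exact_mod_cast hnc.ne' : (nc:ℝ) ≠ 0), one_mul]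
  congr 1
  exact Finset.sum_congr rfl fun q _ => by rw [hP]; beta_reduce; rw [prod_block m δ Z s hs q]

theorem stmt_5 {nr nc Qr Qc : ℕ} (hnc : 0 < nc)
    (p : Fin Qr → ℝ) (r : Fin Qc → ℝ) (δ : Fin Qr → Fin Qc → ℝ)
    (hp0 : ∀ k, 0 ≤ p k) (hp1 : ∑ k, p k = 1)
    (hr0 : ∀ q, 0 ≤ r q) (hr1 : ∑ q, r q = 1)
    (hδ : ∀ k q, 0 < δ k q ∧ δ k q < 1)
    (m : ℕ) (hm : m ≤ nr) :
    -- E_{(A,S)}[R(A,S,m)] where, given Z, S is uniform on block-ordered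
    -- sequences and A, S are conditionally independent given Z
    (∑ Z : Fin nr → Fin Qr,
        (∏ i, p (Z i)) *
          (((blockSeqs Z).card : ℝ)⁻¹ *
            ∑ s ∈ blockSeqs Z,
              ∑ W : Fin nc → Fin Qc,
                (∏ j, r (W j)) *
                  ∑ A : Fin nr → Fin nc → Bool, condProb δ Z W A * rob A s m))
      = 1 - ∑ q, r q *
          ∑ n ∈ (Fintype.piFinset fun _ : Fin Qr => Finset.range (nr + 1)).filter
              (fun n => ∑ k, n k = nr),
            (Nat.multinomial Finset.univ n : ℝ) *
              ∏ k, p k ^ (n k) *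
                (1 - δ k q) ^ (min (n k) ((∑ l ∈ Finset.Iic k, n l) - m)) := by
  classical
  have hinner : ∀ Z : Fin nr → Fin Qr,
      (((blockSeqs Z).card : ℝ)⁻¹ *
        ∑ s ∈ blockSeqs Z, ∑ W : Fin nc → Fin Qc, (∏ j, r (W j)) *
          ∑ A : Fin nr → Fin nc → Bool, condProb δ Z W A * rob A s m)
      = 1 - ∑ q, r q *
          ∏ k, (1 - δ k q) ^ (min (cnt Z k) ((∑ l ∈ Iic k, cnt Z l) - m)) := by
    intro Z
    have hne : (blockSeqs Z).Nonempty := ⟨Tuple.sort Z, by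
      rw [blockSeqs, mem_filter]
      exact ⟨mem_univ _, Tuple.monotone_sort Z⟩⟩
    have hconst : ∀ s ∈ blockSeqs Z,
        (∑ W : Fin nc → Fin Qc, (∏ j, r (W j)) *
          ∑ A : Fin nr → Fin nc → Bool, condProb δ Z W A * rob A s m)
        = 1 - ∑ q, r q *
            ∏ k, (1 - δ k q) ^ (min (cnt Z k) ((∑ l ∈ Iic k, cnt Z l) - m)) := by
      intro s hs
      exact per_s hnc r hr1 δ Z s ((mem_filter.mp hs).2) m
    rw [Finset.sum_congr rfl hconst, Finset.sum_const, nsmul_eq_mul, ← mul_assoc,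
      inv_mul_cancel₀ (by exact_mod_cast (Finset.card_ne_zero.mpr hne) : ((blockSeqs Z).card : ℝ) ≠ 0),
      one_mul]
  rw [Finset.sum_congr rfl (fun Z _ => by rw [hinner Z])]
  have hsplit : ∀ Z : Fin nr → Fin Qr,
      (∏ i, p (Z i)) * (1 - ∑ q, r q *
          ∏ k, (1 - δ k q) ^ (min (cnt Z k) ((∑ l ∈ Iic k, cnt Z l) - m)))
      = (∏ i, p (Z i)) - ∑ q, r q * ((∏ i, p (Z i)) *
          ∏ k, (1 - δ k q) ^ (min (cnt Z k) ((∑ l ∈ Iic k, cnt Z l) - m))) := by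
    intro Z
    rw [mul_sub, mul_one, Finset.mul_sum]
    congr 1
    exact Finset.sum_congr rfl fun q _ => by ring
  rw [Finset.sum_congr rfl (fun Z _ => hsplit Z), Finset.sum_sub_distrib,
    sum_prob_one p hp1, Finset.sum_comm]
  congr 1
  refine Finset.sum_congr rfl fun q _ => ?_
  rw [← Finset.mul_sum]
  congr 1
  have hmaps : ∀ Z ∈ (univ : Finset (Fin nr → Fin Qr)),
      cnt Z ∈ (Fintype.piFinset fun _ : Fin Qr => Finset.range (nr + 1)).filter
        (fun n => ∑ k, n k = nr) := by
    intro Z _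
    rw [mem_filter]
    constructor
    · rw [Fintype.mem_piFinset]
      intro k
      rw [mem_range, Nat.lt_succ_iff]
      calc cnt Z k ≤ (univ : Finset (Fin nr)).card := Finset.card_filter_le _ _
        _ = nr := by rw [card_univ, Fintype.card_fin]
    · exact sum_cnt Z
  rw [← Finset.sum_fiberwise_of_maps_to hmaps
    (fun Z => (∏ i, p (Z i)) *
      ∏ k, (1 - δ k q) ^ (min (cnt Z k) ((∑ l ∈ Iic k, cnt Z l) - m)))]
  refine Finset.sum_congr rfl fun n hn => ?_
  have hn' : ∑ k, n k = nr := (mem_filter.mp hn).2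
  have hZn : ∀ Z ∈ (univ : Finset (Fin nr → Fin Qr)).filter (fun Z => cnt Z = n),
      (∏ i, p (Z i)) *
          ∏ k, (1 - δ k q) ^ (min (cnt Z k) ((∑ l ∈ Iic k, cnt Z l) - m))
        = ∏ k, p k ^ n k * (1 - δ k q) ^ (min (n k) ((∑ l ∈ Iic k, n l) - m)) := by
    intro Z hZ
    have hc : cnt Z = n := (mem_filter.mp hZ).2
    rw [prod_comp_cnt Z p, hc, ← Finset.prod_mul_distrib]
  rw [Finset.sum_congr rfl hZn, Finset.sum_const, card_cnt_eq n hn', nsmul_eq_mul]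
end

section
/- Jensen upper bound for the expected robustness function: for any biSBM parameters θ = (π, ρ, δ) with density d = Σ_{k,q} π_k δ_{kq} ρ_q and any m ∈ {0,...,n_r}, 1 - Σ_q ρ_q (1-δ_{+q})^{n_r-m} ≤ 1 - (1-d)^{n_r-m}. That is, among all biSBM parameters with fixed density d, the Erdős–Rényi expected robustness function is maximal. -/
open Finset

theorem stmt_12 {nr Qr Qc : ℕ}
    (p : Fin Qr → ℝ) (r : Fin Qc → ℝ) (δ : Fin Qr → Fin Qc → ℝ)
    (hp0 : ∀ k, 0 ≤ p k) (hp1 : ∑ k, p k = 1)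
    (hr0 : ∀ q, 0 ≤ r q) (hr1 : ∑ q, r q = 1)
    (hδ : ∀ k q, 0 ≤ δ k q ∧ δ k q ≤ 1)
    (d : ℝ) (hd : d = ∑ k, ∑ q, p k * δ k q * r q)
    (m : ℕ) (hm : m ≤ nr) :
    1 - ∑ q, r q * (1 - ∑ k, p k * δ k q) ^ (nr - m)
      ≤ 1 - (1 - d) ^ (nr - m) := by
  have hconv : ConvexOn ℝ (Set.Ici (0:ℝ)) fun x => x ^ (nr - m) := convexOn_pow _
  have hmem : ∀ q, (1 - ∑ k, p k * δ k q) ∈ Set.Ici (0:ℝ) := by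
    intro q
    have : ∑ k, p k * δ k q ≤ ∑ k, p k := by
      apply Finset.sum_le_sum
      intro k _
      nlinarith [(hδ k q).2, hp0 k]
    simp only [Set.mem_Ici]
    linarith [hp1]
  have hd' : 1 - d = ∑ q, r q • (1 - ∑ k, p k * δ k q) := by
    rw [hd, Finset.sum_comm]
    simp only [smul_eq_mul, mul_sub, Finset.sum_sub_distrib, Finset.mul_sum, mul_one, hr1]
    ring_nf
    congr 1
    apply Finset.sum_congr rfl
    intro q _
    apply Finset.sum_congr rfl
    intro k _
    ring
  have key := hconv.map_sum_le (t := Finset.univ) (w := r)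
    (p := fun q => 1 - ∑ k, p k * δ k q)
    (fun q _ => hr0 q) hr1 (fun q _ => hmem q)
  rw [← hd'] at key
  simp only [smul_eq_mul] at key
  linarith
end

section
/- Characterization of maximizers of the expected robustness at fixed density: for n_r ≥ 2 and m ∈ {0,...,n_r-2}, a biSBM parameter θ = (π, ρ, δ) with density d and all ρ_q > 0 achieves the upper bound 1 - Σ_q ρ_q (1-δ_{+q})^{n_r-m} = 1 - (1-d)^{n_r-m} if and only if δ_{+q} = δ_{+q'} for all pairs of column blocks q, q' (equivalently, δ_{+q} = d for all q). -/
open Finset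

theorem stmt_13 {nr Qr Qc : ℕ} (hnr : 2 ≤ nr)
    (p : Fin Qr → ℝ) (r : Fin Qc → ℝ) (δ : Fin Qr → Fin Qc → ℝ)
    (hp0 : ∀ k, 0 ≤ p k) (hp1 : ∑ k, p k = 1)
    (hr0 : ∀ q, 0 < r q) (hr1 : ∑ q, r q = 1)
    (hδ : ∀ k q, 0 ≤ δ k q ∧ δ k q ≤ 1)
    (d : ℝ) (hd : d = ∑ k, ∑ q, p k * δ k q * r q)
    (m : ℕ) (hm : m ≤ nr - 2) :
    1 - ∑ q, r q * (1 - ∑ k, p k * δ k q) ^ (nr - m) = 1 - (1 - d) ^ (nr - m)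
      ↔ ∀ q q', (∑ k, p k * δ k q) = ∑ k, p k * δ k q' := by
  set n := nr - m with hn
  have hn2 : 2 ≤ n := le_tsub_of_add_le_left (by omega)
  set f : Fin Qc → ℝ := fun q => ∑ k, p k * δ k q with hf
  have hfle : ∀ q, f q ≤ 1 := by
    intro q
    calc f q ≤ ∑ k, p k := by
          apply Finset.sum_le_sum
          intro k _
          nlinarith [(hδ k q).1, (hδ k q).2, hp0 k]
      _ = 1 := hp1
  have hdf : d = ∑ q, r q * f q := by
    rw [hd, Finset.sum_comm]
    refine Finset.sum_congr rfl fun q _ => ?_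
    rw [Finset.mul_sum]
    refine Finset.sum_congr rfl fun k _ => ?_
    ring
  have hd1 : 1 - d = ∑ q, r q * (1 - f q) := by
    simp [mul_sub, Finset.sum_sub_distrib, ← Finset.sum_mul, hr1, hdf]
  have key := (strictConvexOn_pow hn2).map_sum_eq_iff
    (w := r) (p := fun q => 1 - f q) (t := Finset.univ)
    (fun q _ => hr0 q) hr1 (fun q _ => by simp [hfle q])
  simp only [smul_eq_mul] at key
  rw [hd1]
  constructor
  · intro h
    have heq : (∑ q, r q * (1 - f q)) ^ n = ∑ q, r q * (1 - f q) ^ n := by linarith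
    have := key.mp heq
    intro q q'
    have h1 := this q (Finset.mem_univ q)
    have h2 := this q' (Finset.mem_univ q')
    have : 1 - f q = 1 - f q' := by rw [h1, h2]
    simpa [hf] using by linarith
  · intro h
    have hconst : ∀ q, 1 - f q = ∑ i, r i * (1 - f i) := by
      intro q
      have : ∀ i, f i = f q := fun i => h i q
      simp only [this]
      rw [← Finset.sum_mul, hr1, one_mul]
    have := key.mpr (fun j _ => hconst j)
    linarith
end

section
/- Upper bound for the expected robustness statistic: for any biSBM parameters θ = (π, ρ, δ) with density d = Σ_{k,q} π_k δ_{kq} ρ_q > 0, and any n_r ≥ 1, n_c ≥ 1, the expected robustness statistic under uniform extinction sequences satisfies (1/n_r) Σ_{m=0}^{n_r} (1 - Σ_q ρ_q (1-δ_{+q})^{n_r-m}) ≤ 1 - (1/n_r) · ((1-d) - (1-d)^{n_r+1}) / d. -/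
open Finset

theorem stmt_14 {nr nc Qr Qc : ℕ} (hnr : 1 ≤ nr) (hnc : 1 ≤ nc)
    (p : Fin Qr → ℝ) (r : Fin Qc → ℝ) (δ : Fin Qr → Fin Qc → ℝ)
    (hp0 : ∀ k, 0 ≤ p k) (hp1 : ∑ k, p k = 1)
    (hr0 : ∀ q, 0 ≤ r q) (hr1 : ∑ q, r q = 1)
    (hδ : ∀ k q, 0 ≤ δ k q ∧ δ k q ≤ 1)
    (d : ℝ) (hd : d = ∑ k, ∑ q, p k * δ k q * r q) (hdpos : 0 < d) :
    (nr : ℝ)⁻¹ *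
        ∑ m ∈ Finset.range (nr + 1),
          (1 - ∑ q, r q * (1 - ∑ k, p k * δ k q) ^ (nr - m))
      ≤ 1 - (nr : ℝ)⁻¹ * (((1 - d) - (1 - d) ^ (nr + 1)) / d) := by
  have hd1 : ∀ q, ∑ k, p k * δ k q ≤ 1 := by
    intro q
    calc ∑ k, p k * δ k q ≤ ∑ k, p k := by
          apply Finset.sum_le_sum; intro k _
          nlinarith [(hδ k q).1, (hδ k q).2, hp0 k]
      _ = 1 := hp1
  have hd0 : ∀ q, 0 ≤ 1 - ∑ k, p k * δ k q := fun q => by linarith [hd1 q]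
  have hmean : ∑ q, r q * (1 - ∑ k, p k * δ k q) = 1 - d := by
    have h0 : ∑ q, r q * (1 - ∑ k, p k * δ k q)
        = (∑ q, r q) - ∑ q, ∑ k, p k * δ k q * r q := by
      rw [← Finset.sum_sub_distrib]
      refine Finset.sum_congr rfl fun q _ => ?_
      rw [mul_sub, mul_one, Finset.mul_sum]
      congr 1
      exact Finset.sum_congr rfl fun k _ => by ring
    rw [h0, hr1, hd, Finset.sum_comm]
  have hjensen : ∀ n : ℕ, (1 - d) ^ n ≤ ∑ q, r q * (1 - ∑ k, p k * δ k q) ^ n := by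
    intro n
    have := Real.pow_arith_mean_le_arith_mean_pow Finset.univ r
      (fun q => 1 - ∑ k, p k * δ k q) (fun q _ => hr0 q) hr1 (fun q _ => hd0 q) n
    rwa [hmean] at this
  have hsum : ∑ m ∈ Finset.range (nr + 1), ((1 - d) : ℝ) ^ (nr - m)
      = (1 - (1 - d) ^ (nr + 1)) / d := by
    have hre : ∑ m ∈ Finset.range (nr + 1), ((1 - d) : ℝ) ^ (nr - m)
        = ∑ m ∈ Finset.range (nr + 1), ((1 - d) : ℝ) ^ m := by
      rw [← Finset.sum_range_reflect]
      refine Finset.sum_congr rfl fun m hm => ?_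
      rw [Finset.mem_range] at hm
      have h2 : nr - (nr + 1 - 1 - m) = m := by omega
      rw [h2]
    rw [hre, geom_sum_eq (by intro h; apply hdpos.ne'; linarith)]
    have h3 : (1 - d) - 1 = -d := by ring
    rw [h3, div_eq_div_iff (neg_ne_zero.mpr hdpos.ne') hdpos.ne']
    ring
  have hstep : ∑ m ∈ Finset.range (nr + 1),
      (1 - ∑ q, r q * (1 - ∑ k, p k * δ k q) ^ (nr - m))
      ≤ (nr + 1 : ℝ) - (1 - (1 - d) ^ (nr + 1)) / d := by
    rw [← hsum]
    rw [Finset.sum_sub_distrib]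
    have h1 : ∑ m ∈ Finset.range (nr + 1), (1 : ℝ) = (nr + 1 : ℝ) := by simp
    rw [h1]
    gcongr with m hm
    exact hjensen _
  have hnrpos : (0 : ℝ) < nr := by exact_mod_cast hnr
  have key : (1 - (1 - d) ^ (nr + 1)) / d = 1 + ((1 - d) - (1 - d) ^ (nr + 1)) / d := by
    field_simp
    ring
  rw [key] at hstep
  have := mul_le_mul_of_nonneg_left hstep (le_of_lt (inv_pos.mpr hnrpos))
  calc (nr : ℝ)⁻¹ * ∑ m ∈ Finset.range (nr + 1),
        (1 - ∑ q, r q * (1 - ∑ k, p k * δ k q) ^ (nr - m))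
      ≤ (nr : ℝ)⁻¹ * ((nr + 1 : ℝ) - (1 + ((1 - d) - (1 - d) ^ (nr + 1)) / d)) := this
    _ = 1 - (nr : ℝ)⁻¹ * (((1 - d) - (1 - d) ^ (nr + 1)) / d) := by
        field_simp
        ring
end
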